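/- arXiv:0911.3370 — 8 statements merged into one kernel-verified Lean document; each statement's English description precedes it below -/
import Mathlib

section
/- Let μ > 0 be non-integer, m = ⌈μ⌉, ν = m - μ, and let a, t be such that t ∈ ℕ_{a+m} (i.e., t = a + m + j for some nonnegative integer j). Then ∑_{s=a+ν}^{t-μ} (t-s-1)^(μ-1) = (t-a-ν)^(μ)/μ, where x^(α) = Γ(x+1)/Γ(x-α+1) is the generalized falling factorial and the sum is over s = a+ν, a+ν+1, ..., t-μ. -/
open Finset

/-- Generalized falling factorial `t^(α) = Γ(t+1)/Γ(t-α+1)`. -/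
noncomputable def gff (t α : ℝ) : ℝ := Real.Gamma (t + 1) / Real.Gamma (t - α + 1)

/-- Forward difference operator `Δf(t) = f(t+1) - f(t)`. -/
def fdiff (f : ℝ → ℝ) : ℝ → ℝ := fun t => f (t + 1) - f t

/-- The ν-th fractional sum with base point `a`:
`Δ^{-ν} f(t) = (1/Γ(ν)) ∑_{s=a}^{t-ν} (t-s-1)^(ν-1) f(s)`, the sum running over
`s = a, a+1, ..., t-ν` (for `t ∈ ℕ_{a+ν}`, there are `t-ν-a+1` terms). -/
noncomputable def fsum (ν a : ℝ) (f : ℝ → ℝ) (t : ℝ) : ℝ :=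
  (1 / Real.Gamma ν) *
    ∑ j ∈ Finset.range ((⌊t - ν - a⌋).toNat + 1),
      gff (t - (a + j) - 1) (ν - 1) * f (a + j)

/-- The Caputo-like fractional difference `Δ_*^μ f = Δ^{-(⌈μ⌉-μ)} (Δ^{⌈μ⌉} f)`. -/
noncomputable def caputo (μ a : ℝ) (f : ℝ → ℝ) : ℝ → ℝ :=
  fsum ((⌈μ⌉₊ : ℝ) - μ) a (fdiff^[⌈μ⌉₊] f)

theorem stmt1 (μ a ν : ℝ) (hμ : 0 < μ) (hni : ∀ n : ℤ, μ ≠ n) (m : ℕ)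
    (hm : m = ⌈μ⌉₊) (hν : ν = m - μ) (j : ℕ) (t : ℝ) (ht : t = a + m + j) :
    ∑ i ∈ Finset.range (j + 1), gff (t - (a + ν + i) - 1) (μ - 1) =
      gff (t - a - ν) μ / μ := by
  have aux : ∀ n : ℕ, ∑ k ∈ Finset.range (n + 1),
      Real.Gamma (μ + k) / (k.factorial : ℝ)
        = Real.Gamma (μ + n + 1) / (μ * n.factorial) := by
    intro n
    induction n with
    | zero =>
        simp [Real.Gamma_add_one hμ.ne']
        field_simp
    | succ n ih =>
        rw [Finset.sum_range_succ, ih]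
        have h1 : μ + n + 1 ≠ 0 := by positivity
        have h2 : Real.Gamma (μ + n + 1 + 1) = (μ + n + 1) * Real.Gamma (μ + n + 1) :=
          Real.Gamma_add_one h1
        have hf : ((n + 1).factorial : ℝ) = (n + 1) * n.factorial := by
          push_cast [Nat.factorial_succ]; ring
        have hfn : (n.factorial : ℝ) ≠ 0 := by positivity
        have hn1 : (n : ℝ) + 1 ≠ 0 := by positivity
        push_cast [hf] at *
        rw [show μ + ((n : ℝ) + 1) = μ + n + 1 by ring, h2]
        field_simp
        ring
  have key : ∀ i ∈ Finset.range (j + 1),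
      gff (t - (a + ν + i) - 1) (μ - 1)
        = Real.Gamma (μ + ((j - i : ℕ) : ℝ)) / (((j - i : ℕ).factorial : ℝ)) := by
    intro i hi
    have hij : i ≤ j := Nat.lt_succ_iff.mp (Finset.mem_range.mp hi)
    unfold gff
    rw [Nat.cast_sub hij]
    have e1 : t - (a + ν + i) - 1 + 1 = μ + ((j : ℝ) - i) := by
      rw [ht, hν]; ring
    have e2 : t - (a + ν + i) - 1 - (μ - 1) + 1 = ((j - i : ℕ) : ℝ) + 1 := by
      rw [Nat.cast_sub hij, ht, hν]; ring
    rw [e1, e2, Real.Gamma_nat_eq_factorial]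
  rw [Finset.sum_congr rfl key]
  have hrefl := Finset.sum_range_reflect
    (fun k : ℕ => Real.Gamma (μ + (k : ℝ)) / ((k.factorial : ℝ))) (j + 1)
  simp only [Nat.add_sub_cancel] at hrefl
  rw [hrefl, aux j]
  have e3 : t - a - ν + 1 = μ + j + 1 := by rw [ht, hν]; ring
  have e4 : t - a - ν - μ + 1 = (j : ℝ) + 1 := by rw [ht, hν]; ring
  unfold gff
  rw [e3, e4, Real.Gamma_nat_eq_factorial]
  rw [div_div, mul_comm]
end

section
/- Let f : ℕ → ℝ, let m be a positive integer, a ∈ ℕ, and t = a + m + j for some j ∈ ℕ. Then f(t) = ∑_{k=0}^{m-1} ((t-a)^(k)/k!)·Δ^k f(a) + (1/(m-1)!)·∑_{s=a}^{t-m} (t-s-1)^(m-1)·Δ^m f(s), where Δ is the forward difference operator Δf(s) = f(s+1) - f(s), and t^(k) = t(t-1)···(t-k+1) is the falling factorial. -/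
open Finset

/-- Forward difference operator on sequences: `Δf(n) = f(n+1) - f(n)`. -/
def fdiffN (f : ℕ → ℝ) : ℕ → ℝ := fun n => f (n + 1) - f n

lemma hockey (r j : ℕ) : ∑ i ∈ range (j+1), (r + j - i).choose r = (r + j + 1).choose (r+1) := by
  have : ∑ i ∈ range (j+1), (r + j - i).choose r = ∑ i ∈ range (j+1), (i + r).choose r := by
    rw [← Finset.sum_range_reflect]
    apply Finset.sum_congr rfl
    intro i hi
    simp only [Finset.mem_range] at hi
    congr 1
    omega
  rw [this, Nat.sum_range_add_choose]
  congr 1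
  omega

lemma tel (g : ℕ → ℝ) (a : ℕ) : ∀ i, g (a + i) = g a + ∑ l ∈ range i, fdiffN g (a + l) := by
  intro i
  induction i with
  | zero => simp
  | succ i ih =>
    have hf : fdiffN g (a+i) = g (a+i+1) - g (a+i) := rfl
    rw [Finset.sum_range_succ, hf, show a + (i+1) = a+i+1 from rfl]
    linarith [ih]

lemma swap (c d : ℕ → ℝ) (n : ℕ) :
    ∑ i ∈ range n, c i * ∑ l ∈ range i, d l
      = ∑ l ∈ range n, (∑ i ∈ Finset.Ico (l+1) n, c i) * d l := by
  induction n with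
  | zero => simp
  | succ n ih =>
    rw [Finset.sum_range_succ, ih, Finset.sum_range_succ]
    have h1 : ∀ l ∈ range n, (∑ i ∈ Finset.Ico (l+1) (n+1), c i) * d l
        = (∑ i ∈ Finset.Ico (l+1) n, c i) * d l + c n * d l := by
      intro l hl
      simp only [Finset.mem_range] at hl
      rw [Finset.sum_Ico_succ_top (by omega), add_mul]
    rw [Finset.sum_congr rfl h1, Finset.sum_add_distrib]
    simp [Finset.mul_sum, mul_comm]

lemma key (f : ℕ → ℝ) : ∀ r : ℕ, ∀ a j : ℕ,
    f (a + (r+1) + j) = (∑ k ∈ range (r+1), ((r+1+j).choose k : ℝ) * fdiffN^[k] f a)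
      + ∑ i ∈ range (j+1), (((r+j-i).choose r : ℝ)) * fdiffN^[r+1] f (a+i) := by
  intro r
  induction r with
  | zero =>
    intro a j
    simp only [Finset.range_one, Finset.sum_singleton, Nat.choose_zero_right, Nat.cast_one,
      one_mul, Function.iterate_zero, id_eq, Function.iterate_one]
    have := tel f a (j + 1)
    have harg : a + 1 + j = a + (j + 1) := by omega
    rw [harg, this]
    simp
  | succ r ih =>
    intro a j
    have harg : a + (r+1+1) + j = a + (r+1) + (j+1) := by omega
    rw [harg, ih a (j+1)]
    have hsplit : ∀ i, fdiffN^[r+1] f (a + i)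
        = fdiffN^[r+1] f a + ∑ l ∈ range i, fdiffN^[r+1+1] f (a + l) := by
      intro i
      rw [tel (fdiffN^[r+1] f) a i]
      congr 1
      apply Finset.sum_congr rfl
      intro l _
      exact (congrFun (Function.iterate_succ_apply' fdiffN (r+1) f) (a+l)).symm
    have hmain : ∑ i ∈ range (j+1+1), ((r+(j+1)-i).choose r : ℝ) * fdiffN^[r+1] f (a+i)
        = ((r+1+(j+1)).choose (r+1) : ℝ) * fdiffN^[r+1] f a
          + ∑ i ∈ range (j+1), (((r+1+j-i).choose (r+1) : ℝ)) * fdiffN^[r+1+1] f (a+i) := by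
      calc ∑ i ∈ range (j+1+1), ((r+(j+1)-i).choose r : ℝ) * fdiffN^[r+1] f (a+i)
          = ∑ i ∈ range (j+1+1), (((r+(j+1)-i).choose r : ℝ) * fdiffN^[r+1] f a
              + ((r+(j+1)-i).choose r : ℝ) * ∑ l ∈ range i, fdiffN^[r+1+1] f (a + l)) := by
            apply Finset.sum_congr rfl
            intro i _
            rw [hsplit i, mul_add]
        _ = (∑ i ∈ range (j+1+1), ((r+(j+1)-i).choose r : ℝ)) * fdiffN^[r+1] f a
              + ∑ l ∈ range (j+1+1),
                  (∑ i ∈ Finset.Ico (l+1) (j+1+1), ((r+(j+1)-i).choose r : ℝ))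
                    * fdiffN^[r+1+1] f (a + l) := by
            rw [Finset.sum_add_distrib, ← Finset.sum_mul,
              swap (fun i => ((r+(j+1)-i).choose r : ℝ)) (fun l => fdiffN^[r+1+1] f (a + l))]
        _ = ((r+1+(j+1)).choose (r+1) : ℝ) * fdiffN^[r+1] f a
          + ∑ i ∈ range (j+1), (((r+1+j-i).choose (r+1) : ℝ)) * fdiffN^[r+1+1] f (a+i) := by
            congr 1
            · rw [← Nat.cast_sum, hockey r (j+1), show r+(j+1)+1 = r+1+(j+1) from by omega]
            · rw [Finset.sum_range_succ]
              simp only [Finset.Ico_self, Finset.sum_empty, zero_mul, add_zero]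
              apply Finset.sum_congr rfl
              intro l hl
              simp only [Finset.mem_range] at hl
              congr 1
              have hre : ∑ i ∈ Finset.Ico (l+1) (j+1+1), (r+(j+1)-i).choose r
                  = ∑ i ∈ range (j-l+1), (r + (j-l) - i).choose r := by
                rw [Finset.sum_Ico_eq_sum_range]
                apply Finset.sum_congr (by congr 1; omega)
                intro i _
                congr 1
                omega
              rw [← Nat.cast_sum, hre, hockey r (j-l),
                show r+(j-l)+1 = r+1+j-l from by omega]
    rw [hmain, show r+1+(j+1) = r+1+1+j from by omega, Finset.sum_range_succ _ (r+1)]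
    ring

theorem stmt3 (f : ℕ → ℝ) (m : ℕ) (hm : 0 < m) (a j t : ℕ) (ht : t = a + m + j) :
    f t =
      (∑ k ∈ Finset.range m,
          ((t - a).descFactorial k : ℝ) / (k.factorial : ℝ) * fdiffN^[k] f a) +
        (1 / ((m - 1).factorial : ℝ)) *
          ∑ i ∈ Finset.range (j + 1),
            ((t - (a + i) - 1).descFactorial (m - 1) : ℝ) * fdiffN^[m] f (a + i) := by
  obtain ⟨r, rfl⟩ : ∃ r, m = r + 1 := ⟨m - 1, by omega⟩
  subst ht
  simp only [Nat.add_sub_cancel]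
  have h1 : ∀ k, ((a + (r+1) + j - a).descFactorial k : ℝ) / (k.factorial : ℝ)
      = ((r+1+j).choose k : ℝ) := by
    intro k
    rw [show a + (r+1) + j - a = r+1+j by omega, Nat.descFactorial_eq_factorial_mul_choose,
      Nat.cast_mul, mul_comm, mul_div_assoc,
      div_self (by exact_mod_cast k.factorial_ne_zero), mul_one]
  have h2 : ∀ i, i < j + 1 → ((a + (r+1) + j - (a + i) - 1).descFactorial r : ℝ)
      = (r.factorial : ℝ) * ((r+j-i).choose r : ℝ) := by
    intro i hi
    rw [show a + (r+1) + j - (a + i) - 1 = r + j - i by omega,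
      Nat.descFactorial_eq_factorial_mul_choose]
    push_cast
    ring
  rw [key f r a j]
  congr 1
  · apply Finset.sum_congr rfl
    intro k _
    rw [h1]
  · rw [Finset.mul_sum]
    apply Finset.sum_congr rfl
    intro i hi
    simp only [Finset.mem_range] at hi
    rw [h2 i hi, mul_assoc, one_div,
      inv_mul_cancel_left₀ (by exact_mod_cast r.factorial_ne_zero)]
end

section
/- Let μ > 0 be non-integer, m = ⌈μ⌉, ν = m - μ, f defined on ℕ_a with a ∈ ℤ⁺. Then for all t ∈ ℕ_{a+m}: f(t) = ∑_{k=0}^{m-1} ((t-a)^(k)/k!)·Δ^k f(a) + (1/Γ(μ))·∑_{s=a+ν}^{t-μ} (t-s-1)^(μ-1)·Δ_*^μ f(s), where Δ_*^μ f(t) = (1/Γ(ν))·∑_{s=a}^{t-ν} (t-s-1)^(ν-1)·(Δ^m f)(s) is the Caputo-like fractional difference. -/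
/-
On the lattice `a + ν + ℕ` the fractional sum of order `ν > 0` is the convolution of `g(a + ·)`
with the sequence `multichoose ν k = ν (ν+1) ⋯ (ν+k-1) / k!`, the coefficients of `(1 - X)^(-ν)`.
Chu–Vandermonde for `multichoose` makes these convolutions compose additively in the order, so the
`μ`-th sum of the Caputo difference `Δ^{-ν} Δ^m f` is the `m`-th sum of `Δ^m f`. That this equals
`f` minus its Taylor polynomial of degree `m - 1` is the integer discrete Taylor formula, proved by
induction on `m`.
-/

open Finset

namespace Ring

variable {R : Type*} [CommRing R] [BinomialRing R]

theorem add_multichoose_eq (r s : R) (k : ℕ) :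
    multichoose (r + s) k = ∑ ij ∈ antidiagonal k, multichoose r ij.1 * multichoose s ij.2 := by
  have h := add_choose_eq (r := -r) (s := -s) k (Commute.all _ _)
  rw [← neg_add, choose_neg'] at h
  have hsign : ∀ ij ∈ antidiagonal k, choose (-r) ij.1 * choose (-s) ij.2
      = Int.negOnePow k • (multichoose r ij.1 * multichoose s ij.2) := by
    intro ij hij
    rw [← mem_antidiagonal.mp hij, choose_neg', choose_neg', smul_mul_smul_comm,
      Nat.cast_add, Int.negOnePow_add]
  rw [sum_congr rfl hsign, ← smul_sum] at h
  exact (smul_left_cancel_iff _).mp h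

theorem multichoose_natCast_add_one (n k : ℕ) :
    multichoose ((n : R) + 1) k = (n + k).choose k := by
  rw [multichoose_eq, show (n : R) + 1 + k - 1 = ((n + k : ℕ) : R) by push_cast; ring,
    choose_natCast]

theorem sum_range_multichoose_sub (r : R) (n : ℕ) :
    ∑ i ∈ range (n + 1), multichoose r (n - i) = multichoose (r + 1) n := by
  rw [add_comm r 1, add_multichoose_eq, Nat.sum_antidiagonal_eq_sum_range_succ_mk]
  simp [multichoose_one]

theorem sum_multichoose_mul_sum_multichoose (x y : R) (g : ℕ → R) (j : ℕ) :
    ∑ i ∈ range (j + 1), multichoose x (j - i) * ∑ p ∈ range (i + 1), multichoose y (i - p) * g p =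
      ∑ p ∈ range (j + 1), multichoose (x + y) (j - p) * g p := by
  let F (z : R) : PowerSeries R := PowerSeries.mk (multichoose z)
  have hF : F y * F x = F (x + y) := by
    ext k
    simp [F, PowerSeries.coeff_mul, add_multichoose_eq, add_comm x y]
  have key := congrArg (PowerSeries.coeff j) (mul_assoc (PowerSeries.mk g) (F y) (F x))
  rw [hF] at key
  simp only [F, PowerSeries.coeff_mul, Nat.sum_antidiagonal_eq_sum_range_succ_mk,
    PowerSeries.coeff_mk] at key
  simpa only [mul_comm] using key

end Ring

open Ring

theorem Real.Gamma_add_nat_eq_ascPochhammer_mul {x : ℝ} (hx : ∀ k : ℕ, x ≠ -k) (n : ℕ) :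
    Real.Gamma (x + n) = (ascPochhammer ℝ n).eval x * Real.Gamma x := by
  induction n with
  | zero => simp
  | succ n ih =>
    have hxn : x + n ≠ 0 := fun h => hx n (by linarith)
    rw [Nat.cast_succ, ← add_assoc, Real.Gamma_add_one hxn, ih, ascPochhammer_succ_eval]
    ring

theorem gff_add_natCast_sub_one {x : ℝ} (hx : ∀ k : ℕ, x ≠ -k) (n : ℕ) :
    gff (x + n - 1) (x - 1) = multichoose x n * Real.Gamma x := by
  have hfac : (n.factorial : ℝ) * multichoose x n = (ascPochhammer ℝ n).eval x := by
    rw [← nsmul_eq_mul, factorial_nsmul_multichoose_eq_ascPochhammer,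
      Polynomial.ascPochhammer_smeval_eq_eval]
  rw [gff, sub_add_cancel, show x + n - 1 - (x - 1) + 1 = n + 1 by ring,
    Real.Gamma_nat_eq_factorial, Real.Gamma_add_nat_eq_ascPochhammer_mul hx, ← hfac]
  field_simp

theorem gff_natCast_div_factorial {n k : ℕ} (hk : k ≤ n) :
    gff n k / k.factorial = n.choose k := by
  rw [gff, show (n : ℝ) - k + 1 = (n - k : ℕ) + 1 by push_cast [Nat.cast_sub hk]; ring,
    Real.Gamma_nat_eq_factorial, Real.Gamma_nat_eq_factorial, Nat.cast_choose ℝ hk]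
  field_simp

theorem fsum_eq_sum_range {ν a t : ℝ} {j : ℕ} (ht : t = a + ν + j) (g : ℝ → ℝ) :
    fsum ν a g t =
      1 / Real.Gamma ν * ∑ i ∈ range (j + 1), gff (t - (a + i) - 1) (ν - 1) * g (a + i) := by
  rw [fsum, show t - ν - a = j by rw [ht]; ring, Int.floor_natCast, Int.toNat_natCast]

theorem fsum_add_natCast {ν : ℝ} (hν : 0 < ν) (a : ℝ) (g : ℝ → ℝ) (j : ℕ) :
    fsum ν a g (a + ν + j) = ∑ p ∈ range (j + 1), multichoose ν (j - p) * g (a + p) := by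
  have hpole : ∀ k : ℕ, ν ≠ -k := fun k h => (h ▸ hν).not_ge (neg_nonpos.mpr k.cast_nonneg)
  rw [fsum_eq_sum_range rfl, mul_sum]
  refine sum_congr rfl fun p hp => ?_
  rw [show a + ν + j - (a + p) - 1 = ν + (j - p : ℕ) - 1 by
      push_cast [Nat.cast_sub (mem_range_succ_iff.mp hp)]; ring,
    gff_add_natCast_sub_one hpole]
  field_simp [(Real.Gamma_pos_of_pos hν).ne']

theorem fsum_fsum_add_natCast {μ ν : ℝ} (hμ : 0 < μ) (hν : 0 < ν) (a : ℝ) (g : ℝ → ℝ)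
    (j : ℕ) :
    fsum μ (a + ν) (fsum ν a g) (a + ν + μ + j) =
      ∑ p ∈ range (j + 1), multichoose (μ + ν) (j - p) * g (a + p) := by
  simp only [fsum_add_natCast hμ, fsum_add_natCast hν]
  exact sum_multichoose_mul_sum_multichoose μ ν (fun p => g (a + p)) j

theorem taylor_fdiff (f : ℝ → ℝ) (a : ℝ) (m j : ℕ) :
    f (a + m + j) = ∑ k ∈ range m, ((m + j).choose k : ℝ) * fdiff^[k] f a +
      ∑ p ∈ range (j + 1), multichoose (m : ℝ) (j - p) * fdiff^[m] f (a + p) := by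
  induction m generalizing j with
  | zero =>
    rw [sum_range_succ, Nat.sub_self]
    have hvanish : ∀ p ∈ range j, multichoose (0 : ℝ) (j - p) * f (a + p) = 0 := by
      intro p hp
      rw [show j - p = (j - p - 1) + 1 by have := mem_range.mp hp; omega,
        multichoose_zero_succ, zero_mul]
    simp [sum_eq_zero hvanish]
  | succ m ih =>
    set X := fdiff^[m] f
    -- Convolving with `multichoose 1 = 1` takes prefix sums, and those of `Δ X` telescope.
    have htelescope (i : ℕ) :
        ∑ p ∈ range (i + 1), fdiff^[m + 1] f (a + p) = X (a + (i + 1 : ℕ)) - X a := by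
      simpa [Function.iterate_succ_apply', fdiff, add_assoc] using
        sum_range_sub (fun p => X (a + p)) (i + 1)
    have hremainder : ∑ p ∈ range (j + 1),
        multichoose ((m + 1 : ℕ) : ℝ) (j - p) * fdiff^[m + 1] f (a + p) =
          ∑ i ∈ range (j + 1), multichoose (m : ℝ) (j - i) * X (a + (i + 1 : ℕ)) -
            (∑ i ∈ range (j + 1), multichoose (m : ℝ) (j - i)) * X a := by
      rw [Nat.cast_succ, ← sum_multichoose_mul_sum_multichoose (m : ℝ) 1, sum_mul,
        ← sum_sub_distrib]
      simp only [multichoose_one, one_mul, htelescope, mul_sub]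
    have hcoeff : multichoose (m : ℝ) (j + 1) + ∑ i ∈ range (j + 1), multichoose (m : ℝ) (j - i) =
        ((m + 1 + j).choose m : ℝ) := by
      rw [show m + 1 + j = m + (j + 1) by ring, Nat.choose_symm_add,
        ← multichoose_natCast_add_one, ← sum_range_multichoose_sub, sum_range_succ' _ (j + 1)]
      simp [add_comm]
    rw [hremainder, sum_range_succ, ← hcoeff, show a + (m + 1 : ℕ) + j = a + m + (j + 1 : ℕ) by
      push_cast; ring, ih, sum_range_succ' _ (j + 1)]
    simp only [Nat.add_sub_add_right, Nat.sub_zero, Nat.cast_zero, add_zero, X,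
      show m + (j + 1) = m + 1 + j by ring]
    ring

theorem stmt4 (μ ν : ℝ) (hμ : 0 < μ) (hni : ∀ n : ℤ, μ ≠ n) (m : ℕ)
    (hm : m = ⌈μ⌉₊) (hν : ν = m - μ) (f : ℝ → ℝ) (a j : ℕ) (t : ℝ)
    (ht : t = a + m + j) :
    f t =
      (∑ k ∈ Finset.range m, gff (t - a) k / (k.factorial : ℝ) * fdiff^[k] f a) +
        (1 / Real.Gamma μ) *
          ∑ i ∈ Finset.range (j + 1),
            gff (t - (a + ν + i) - 1) (μ - 1) * caputo μ a f (a + ν + i) := by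
  have hν0 : 0 < ν := by
    have hle : μ ≤ m := hm ▸ Nat.le_ceil μ
    have hne : μ ≠ m := by exact_mod_cast hni m
    rw [hν]
    exact sub_pos.mpr (lt_of_le_of_ne hle hne)
  have hcaputo : caputo μ a f = fsum ν a (fdiff^[m] f) := by rw [caputo, ← hm, ← hν]
  have hpoly : ∀ k ∈ range m,
      gff (t - a) k / k.factorial * fdiff^[k] f a = ((m + j).choose k : ℝ) * fdiff^[k] f a := by
    intro k hk
    rw [show t - a = (m + j : ℕ) by rw [ht]; push_cast; ring,
      gff_natCast_div_factorial (by have := mem_range.mp hk; omega)]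
  have ht' : t = a + ν + μ + j := by rw [ht, hν]; ring
  have hrem : 1 / Real.Gamma μ * ∑ i ∈ range (j + 1),
        gff (t - (a + ν + i) - 1) (μ - 1) * caputo μ a f (a + ν + i) =
      ∑ p ∈ range (j + 1), multichoose (m : ℝ) (j - p) * fdiff^[m] f (a + p) := by
    rw [← fsum_eq_sum_range ht', hcaputo, ht', fsum_fsum_add_natCast hμ hν0, hν, add_sub_cancel]
  rw [sum_congr rfl hpoly, hrem, ht]
  exact taylor_fdiff f a m j
end

section
/- Let ν > 0 and let f : ℕ_a → ℝ. Define the ν-th fractional sum Δ^{-ν} f(t) = (1/Γ(ν))·∑_{s=a}^{t-ν} (t-s-1)^(ν-1) f(s) for t ∈ ℕ_{a+ν}. Then for μ, ν > 0 and all t ∈ ℕ_{a+μ+ν}: Δ^{-ν}(Δ^{-μ} f(t)) = Δ^{-(μ+ν)} f(t). -/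
open Finset

/-! On the lattice `a + ν + ℕ` a fractional sum is a Cauchy product: `Δ^{-ν} f (a + ν + n)` is the
`n`-th coefficient of `F · (1 - X)^(-ν)`, where `F = ∑ f (a + i) X^i`, because the kernel
`(ν + k - 1)^(ν-1) / Γ(ν) = Γ(ν + k) / (Γ(ν) k!)` is the `k`-th coefficient of `(1 - X)^(-ν)`.
The semigroup law is then `(1 - X)^(-μ) (1 - X)^(-ν) = (1 - X)^(-(μ + ν))`, i.e. Chu–Vandermonde. -/

open PowerSeries

noncomputable def invOneSubRpow (ν : ℝ) : ℝ⟦X⟧ := rescale (-1) (binomialSeries ℝ (-ν))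

theorem invOneSubRpow_add (μ ν : ℝ) :
    invOneSubRpow (μ + ν) = invOneSubRpow μ * invOneSubRpow ν := by
  rw [invOneSubRpow, neg_add, binomialSeries_add, map_mul]
  rfl

theorem coeff_invOneSubRpow (ν : ℝ) (n : ℕ) :
    coeff n (invOneSubRpow ν) = Ring.multichoose ν n := by
  rw [invOneSubRpow, coeff_rescale, binomialSeries_coeff, Ring.choose_neg', smul_eq_mul, mul_one,
    Units.smul_def, zsmul_eq_mul, ← mul_assoc, Int.cast_negOnePow_natCast, ← mul_pow, neg_one_mul, neg_neg, one_pow, one_mul]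

theorem Real.Gamma_add_nat_eq_mul_ascPochhammer {x : ℝ} (hx : ∀ m : ℕ, x ≠ -m) (n : ℕ) :
    Real.Gamma (x + n) = Real.Gamma x * (ascPochhammer ℝ n).eval x := by
  induction n with
  | zero => simp
  | succ n ih =>
    have hxn : x + n ≠ 0 := fun h => hx n (by linarith)
    rw [Nat.cast_succ, ← add_assoc, Real.Gamma_add_one hxn, ih, ascPochhammer_succ_eval]
    ring

theorem Ring.factorial_mul_multichoose {R : Type*} [Ring R] [BinomialRing R] (x : R) (n : ℕ) :
    n.factorial * Ring.multichoose x n = (ascPochhammer R n).eval x := by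
  rw [← nsmul_eq_mul, Ring.factorial_nsmul_multichoose_eq_ascPochhammer,
    Polynomial.ascPochhammer_smeval_eq_eval]

theorem gff_add_nat_sub_one {x : ℝ} (hx : 0 < x) (n : ℕ) :
    gff (x + n - 1) (x - 1) = Real.Gamma x * Ring.multichoose x n := by
  have hx' : ∀ m : ℕ, x ≠ -m := fun m h => by linarith [m.cast_nonneg (α := ℝ)]
  have hfact : (n.factorial : ℝ) ≠ 0 := by positivity
  rw [gff, show x + n - 1 + 1 = x + n by ring, show x + n - 1 - (x - 1) + 1 = (n : ℝ) + 1 by ring,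
    Real.Gamma_nat_eq_factorial, Real.Gamma_add_nat_eq_mul_ascPochhammer hx',
    ← Ring.factorial_mul_multichoose]
  field_simp

theorem fsum_add_nat {ν : ℝ} (hν : 0 < ν) (a : ℝ) (f : ℝ → ℝ) (n : ℕ) :
    fsum ν a f (a + ν + n) = coeff n (mk (fun i => f (a + i)) * invOneSubRpow ν) := by
  have hΓ : Real.Gamma ν ≠ 0 := (Real.Gamma_pos_of_pos hν).ne'
  rw [fsum, show a + ν + n - ν - a = ((n : ℤ) : ℝ) by push_cast; ring, Int.floor_intCast,
    Int.toNat_natCast, coeff_mul, Nat.sum_antidiagonal_eq_sum_range_succ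
      (fun i j => coeff i (mk fun i => f (a + i)) * coeff j (invOneSubRpow ν)), mul_sum]
  refine sum_congr rfl fun i hi => ?_
  have hin : i ≤ n := Nat.lt_succ_iff.mp (mem_range.mp hi)
  rw [show a + ν + n - (a + i) - 1 = ν + (n - i : ℕ) - 1 by push_cast [hin]; ring,
    gff_add_nat_sub_one hν, coeff_mk, coeff_invOneSubRpow]
  field_simp

theorem stmt5 (μ ν a : ℝ) (hμ : 0 < μ) (hν : 0 < ν) (f : ℝ → ℝ) (n : ℕ)
    (t : ℝ) (ht : t = a + μ + ν + n) :
    fsum ν (a + μ) (fsum μ a f) t = fsum (μ + ν) a f t := by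
  have inner :
      (mk fun j : ℕ => fsum μ a f (a + μ + j)) = mk (fun i => f (a + i)) * invOneSubRpow μ :=
    ext fun j => by rw [coeff_mk, fsum_add_nat hμ]
  rw [ht, fsum_add_nat hν, add_assoc a μ ν, fsum_add_nat (add_pos hμ hν), inner, mul_assoc,
    invOneSubRpow_add]
end

section
/- Let ν > 0 and p a positive integer with ν > p. Then for f defined on ℕ_a and appropriate t, Δ^p(Δ^{-ν} f(t)) = Δ^{-(ν-p)} f(t), where Δ^p is the p-th forward difference and Δ^{-ν} f(t) = (1/Γ(ν))·∑_{s=a}^{t-ν}(t-s-1)^(ν-1) f(s). -/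
open Finset

lemma key_gff (μ k : ℝ) (hμ : 1 < μ) (hk : 0 ≤ k) :
    (1 / Real.Gamma μ) * (gff (μ + k) (μ - 1) - gff (μ + k - 1) (μ - 1))
      = (1 / Real.Gamma (μ - 1)) * gff (μ + k - 1) (μ - 2) := by
  have hμ1 : μ - 1 ≠ 0 := by linarith
  have hΓμ : Real.Gamma μ = (μ - 1) * Real.Gamma (μ - 1) := by
    have := Real.Gamma_add_one hμ1
    rwa [show μ - 1 + 1 = μ by ring] at this
  have hΓ2 : Real.Gamma (k + 2) = (k + 1) * Real.Gamma (k + 1) := by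
    rw [show k + 2 = (k + 1) + 1 by ring, Real.Gamma_add_one (by linarith)]
  have hΓ3 : Real.Gamma (μ + k + 1) = (μ + k) * Real.Gamma (μ + k) :=
    Real.Gamma_add_one (by linarith)
  have hA : Real.Gamma (μ - 1) ≠ 0 := (Real.Gamma_pos_of_pos (by linarith)).ne'
  have hB : Real.Gamma (k + 1) ≠ 0 := (Real.Gamma_pos_of_pos (by linarith)).ne'
  have hk1 : k + 1 ≠ 0 := by linarith
  simp only [gff]
  rw [show μ + k - (μ - 1) + 1 = k + 2 by ring, show μ + k - 1 + 1 = μ + k by ring,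
    show μ + k - 1 - (μ - 1) + 1 = k + 1 by ring,
    show μ + k - 1 - (μ - 2) + 1 = k + 2 by ring, hΓ2, hΓ3, hΓμ]
  field_simp
  ring

lemma stepA (μ a : ℝ) (hμ : 1 < μ) (f : ℝ → ℝ) (m : ℕ) :
    fdiff (fsum μ a f) (a + μ + m) = fsum (μ - 1) a f (a + μ + m) := by
  have hΓμne : Real.Gamma μ ≠ 0 := (Real.Gamma_pos_of_pos (by linarith)).ne'
  have hΓμ1ne : Real.Gamma (μ - 1) ≠ 0 := (Real.Gamma_pos_of_pos (by linarith)).ne'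
  have hfl1 : (⌊a + μ + (m : ℝ) + 1 - μ - a⌋).toNat = m + 1 := by
    rw [show a + μ + (m : ℝ) + 1 - μ - a = ((m + 1 : ℕ) : ℝ) by push_cast; ring,
      Int.floor_natCast, Int.toNat_natCast]
  have hfl2 : (⌊a + μ + (m : ℝ) - μ - a⌋).toNat = m := by
    rw [show a + μ + (m : ℝ) - μ - a = ((m : ℕ) : ℝ) by push_cast; ring,
      Int.floor_natCast, Int.toNat_natCast]
  have hfl3 : (⌊a + μ + (m : ℝ) - (μ - 1) - a⌋).toNat = m + 1 := by
    rw [show a + μ + (m : ℝ) - (μ - 1) - a = ((m + 1 : ℕ) : ℝ) by push_cast; ring,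
      Int.floor_natCast, Int.toNat_natCast]
  have combine : ∀ (A B C : ℕ → ℝ) (c d : ℝ),
      (∀ j ∈ Finset.range (m + 1), c * A j - c * B j = d * C j) →
      (c * A (m + 1) = d * C (m + 1)) →
      c * (∑ j ∈ Finset.range (m + 1 + 1), A j) - c * ∑ j ∈ Finset.range (m + 1), B j
        = d * ∑ j ∈ Finset.range (m + 1 + 1), C j := by
    intro A B C c d hterm hlast
    have h := Finset.sum_congr rfl hterm
    rw [Finset.sum_sub_distrib] at h
    rw [Finset.sum_range_succ A, Finset.sum_range_succ C, mul_add, mul_add,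
      Finset.mul_sum, Finset.mul_sum, Finset.mul_sum] at *
    linarith [h, hlast]
  simp only [fdiff, fsum, hfl1, hfl2, hfl3]
  apply combine
  · intro j hj
    rw [show μ - 1 - 1 = μ - 2 by ring]
    have hjm : (j : ℝ) ≤ m := by
      exact_mod_cast Nat.lt_succ_iff.mp (Finset.mem_range.mp hj)
    rw [show a + μ + (m : ℝ) + 1 - (a + (j : ℝ)) - 1 = μ + ((m : ℝ) - j) by ring,
      show a + μ + (m : ℝ) - (a + (j : ℝ)) - 1 = μ + ((m : ℝ) - j) - 1 by ring]
    have h := key_gff μ ((m : ℝ) - j) hμ (by linarith)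
    linear_combination f (a + (j : ℝ)) * h
  · rw [show a + μ + (m : ℝ) + 1 - (a + ((m + 1 : ℕ) : ℝ)) - 1 = μ - 1 by push_cast; ring,
      show a + μ + (m : ℝ) - (a + ((m + 1 : ℕ) : ℝ)) - 1 = μ - 2 by push_cast; ring,
      show μ - 1 - 1 = μ - 2 by ring]
    simp only [gff]
    rw [show μ - 1 + 1 = μ by ring, show μ - 1 - (μ - 1) + 1 = (1 : ℝ) by ring,
      show μ - 2 + 1 = μ - 1 by ring, show μ - 2 - (μ - 2) + 1 = (1 : ℝ) by ring,
      Real.Gamma_one]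
    field_simp

lemma fdiff_iter_congr (p : ℕ) : ∀ (g h : ℝ → ℝ) (x : ℝ),
    (∀ j : ℕ, g (x + j) = h (x + j)) → fdiff^[p] g x = fdiff^[p] h x := by
  induction p with
  | zero => intro g h x hgh; simpa using hgh 0
  | succ p ih =>
    intro g h x hgh
    rw [Function.iterate_succ_apply, Function.iterate_succ_apply]
    apply ih
    intro j
    simp only [fdiff]
    rw [show x + (j : ℝ) + 1 = x + ((j + 1 : ℕ) : ℝ) by push_cast; ring, hgh (j + 1), hgh j]

lemma main_aux : ∀ (p : ℕ) (ν : ℝ), (p : ℝ) < ν → ∀ (a : ℝ) (f : ℝ → ℝ) (n : ℕ),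
    fdiff^[p] (fsum ν a f) (a + ν + n) = fsum (ν - p) a f (a + ν + n) := by
  intro p
  induction p with
  | zero => intro ν hν a f n; simp
  | succ p ih =>
    intro ν hν a f n
    have hν' : (p : ℝ) + 1 < ν := by push_cast at hν; linarith
    rw [Function.iterate_succ_apply]
    have h1 : fdiff^[p] (fdiff (fsum ν a f)) (a + ν + n)
        = fdiff^[p] (fsum (ν - 1) a f) (a + ν + n) := by
      apply fdiff_iter_congr
      intro j
      rw [show a + ν + (n : ℝ) + j = a + ν + ((n + j : ℕ) : ℝ) by push_cast; ring]
      exact stepA ν a (by linarith [Nat.cast_nonneg (α := ℝ) p]) f (n + j)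
    rw [h1, show a + ν + (n : ℝ) = a + (ν - 1) + ((n + 1 : ℕ) : ℝ) by push_cast; ring,
      ih (ν - 1) (by linarith) a f (n + 1),
      show ν - 1 - (p : ℝ) = ν - ((p + 1 : ℕ) : ℝ) by push_cast; ring]

theorem stmt6 (ν : ℝ) (p : ℕ) (hp : 0 < p) (hν : (p : ℝ) < ν) (a : ℝ)
    (f : ℝ → ℝ) (n : ℕ) (t : ℝ) (ht : t = a + ν + n) :
    fdiff^[p] (fsum ν a f) t = fsum (ν - p) a f t := by
  subst ht
  exact main_aux p ν hν a f n
end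

section
/- Let ν > 0 and p a positive integer, f defined on ℕ_a. Then for t ∈ ℕ_{a+ν}: Δ^{-ν}(Δ^p f(t)) = Δ^p(Δ^{-ν} f(t)) - ∑_{k=0}^{p-1} ((t-a)^(ν-p+k)/Γ(ν+k-p+1))·Δ^k f(a). -/
/-!
The case `p = 1` is summation by parts: writing `Δ^{-ν} g(a+ν+m)` as the convolution
`Γ(ν)⁻¹ ∑_{i+j=m} (ν+i-1)^(ν-1) g(a+j)`, the difference in `m` of the convolution of `g` equals the
convolution of `Δg` plus the single new term `(ν+m)^(ν-1) g(a) / Γ(ν)`. The general case follows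
by induction on `p`, using the power rule `Δ_s s^(α) = α s^(α-1)` in the form
`Δ_s (s^(α) / Γ(α+1)) = s^(α-1) / Γ(α)` to difference the boundary terms.
-/

open Finset

theorem Real.inv_Gamma_eq_mul_inv_Gamma_add_one (x : ℝ) :
    (Real.Gamma x)⁻¹ = x * (Real.Gamma (x + 1))⁻¹ := by
  rcases ne_or_eq x 0 with hx | rfl
  · rw [Real.Gamma_add_one hx, mul_inv, mul_inv_cancel_left₀ hx]
  · rw [zero_add, Real.Gamma_zero, inv_zero, zero_mul]

theorem gff_add_one_sub_gff (s α : ℝ) (hs : s + 1 ≠ 0) :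
    gff (s + 1) α - gff s α = α * gff s (α - 1) := by
  have hden := Real.inv_Gamma_eq_mul_inv_Gamma_add_one (s - α + 1)
  rw [gff, gff, gff, div_eq_mul_inv, div_eq_mul_inv, div_eq_mul_inv, Real.Gamma_add_one hs,
    show s + 1 - α + 1 = s - α + 1 + 1 by ring, show s - (α - 1) + 1 = s - α + 1 + 1 by ring, hden]
  ring

theorem gff_div_Gamma_add_one_sub (s α : ℝ) (hs : s + 1 ≠ 0) :
    gff (s + 1) α / Real.Gamma (α + 1) - gff s α / Real.Gamma (α + 1) =
      gff s (α - 1) / Real.Gamma α := by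
  rw [← sub_div, gff_add_one_sub_gff s α hs, div_eq_mul_inv _ (Real.Gamma α),
    Real.inv_Gamma_eq_mul_inv_Gamma_add_one α]
  ring

theorem fsum_eq_sum_antidiagonal (ν a : ℝ) (g : ℝ → ℝ) (m : ℕ) :
    fsum ν a g (a + ν + m) =
      (1 / Real.Gamma ν) * ∑ x ∈ antidiagonal m, gff (ν + x.2 - 1) (ν - 1) * g (a + x.1) := by
  have hfloor : (⌊a + ν + m - ν - a⌋).toNat = m := by
    rw [show a + ν + (m : ℝ) - ν - a = m by ring, Int.floor_natCast, Int.toNat_natCast]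
  rw [fsum, hfloor,
    Nat.sum_antidiagonal_eq_sum_range_succ (fun i j => gff (ν + j - 1) (ν - 1) * g (a + i))]
  refine congrArg _ (sum_congr rfl fun j hj => ?_)
  rw [Nat.cast_sub (mem_range_succ_iff.mp hj)]
  ring_nf

theorem fsum_fdiff (ν a : ℝ) (g : ℝ → ℝ) (m : ℕ) :
    fsum ν a (fdiff g) (a + ν + m) =
      fdiff (fsum ν a g) (a + ν + m) - gff (ν + m) (ν - 1) / Real.Gamma ν * g a := by
  rw [fdiff, show a + ν + (m : ℝ) + 1 = a + ν + (m + 1 : ℕ) by push_cast; ring,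
    fsum_eq_sum_antidiagonal, fsum_eq_sum_antidiagonal, fsum_eq_sum_antidiagonal,
    Nat.sum_antidiagonal_succ]
  simp only [fdiff, Nat.cast_add, Nat.cast_one, Nat.cast_zero, add_zero, add_sub_cancel_right,
    ← add_assoc, mul_sub, sum_sub_distrib]
  ring

theorem sum_gff_div_Gamma_succ (ν : ℝ) (c : ℕ → ℝ) (p n : ℕ) (hn : ν + n + 1 ≠ 0) :
    ∑ k ∈ range (p + 1),
        gff (ν + n) (ν - (p + 1 : ℕ) + k) / Real.Gamma (ν + k - (p + 1 : ℕ) + 1) * c k =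
      (∑ k ∈ range p, gff (ν + (n + 1 : ℕ)) (ν - p + k) / Real.Gamma (ν + k - p + 1) * c k -
        ∑ k ∈ range p, gff (ν + n) (ν - p + k) / Real.Gamma (ν + k - p + 1) * c k) +
      gff (ν + n) (ν - 1) / Real.Gamma ν * c p := by
  rw [sum_range_succ, ← sum_sub_distrib]
  congr 1
  · refine sum_congr rfl fun k _ => ?_
    rw [← sub_mul]
    have hpow := gff_div_Gamma_add_one_sub (ν + n) (ν - p + k) hn
    push_cast at hpow ⊢
    rw [show ν + k - p + 1 = ν - p + k + 1 by ring, show ν + (n + 1) = ν + n + 1 by ring, hpow]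
    congr 3 <;> ring
  · push_cast
    congr 3 <;> ring

theorem fsum_fdiff_iterate (ν : ℝ) (hν : 0 < ν) (a : ℝ) (f : ℝ → ℝ) (p n : ℕ) :
    fsum ν a (fdiff^[p] f) (a + ν + n) =
      fdiff^[p] (fsum ν a f) (a + ν + n) -
        ∑ k ∈ range p, gff (ν + n) (ν - p + k) / Real.Gamma (ν + k - p + 1) * fdiff^[k] f a := by
  induction p generalizing n with
  | zero => simp
  | succ p ih =>
    have hshift : a + ν + (n : ℝ) + 1 = a + ν + (n + 1 : ℕ) := by push_cast; ring
    rw [Function.iterate_succ_apply', fsum_fdiff, fdiff, hshift, ih (n + 1), ih n,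
      sum_gff_div_Gamma_succ ν _ p n (by positivity), Function.iterate_succ_apply', fdiff, hshift]
    ring

theorem stmt7_general (ν : ℝ) (hν : 0 < ν) (p : ℕ) (a : ℝ) (f : ℝ → ℝ)
    (n : ℕ) (t : ℝ) (ht : t = a + ν + n) :
    fsum ν a (fdiff^[p] f) t =
      fdiff^[p] (fsum ν a f) t -
        ∑ k ∈ Finset.range p,
          gff (t - a) (ν - p + k) / Real.Gamma (ν + k - p + 1) * fdiff^[k] f a := by
  rw [ht, show a + ν + (n : ℝ) - a = ν + n by ring]
  exact fsum_fdiff_iterate ν hν a f p n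

theorem stmt7 (ν : ℝ) (hν : 0 < ν) (p : ℕ) (hp : 0 < p) (a : ℝ) (f : ℝ → ℝ)
    (n : ℕ) (t : ℝ) (ht : t = a + ν + n) :
    fsum ν a (fdiff^[p] f) t =
      fdiff^[p] (fsum ν a f) t -
        ∑ k ∈ Finset.range p,
          gff (t - a) (ν - p + k) / Real.Gamma (ν + k - p + 1) * fdiff^[k] f a :=
  stmt7_general ν hν p a f n t ht
end

section
/- Let μ > p with p ∈ ℕ, μ non-integer, m = ⌈μ⌉, ν = m - μ, f defined on ℕ_a, a ∈ ℤ⁺. Then for all t ∈ ℕ_{a+m-p}: Δ^p f(t) = ∑_{k=p}^{m-1} ((t-a)^(k-p)/(k-p)!)·Δ^k f(a) + (1/Γ(μ-p))·∑_{s=a+ν}^{t-μ+p} (t-s-1)^(μ-p-1)·Δ_*^μ f(s). -/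
/-!
Put `n = m - p` and `t = a + n + j`. The integer Taylor formula of order `n` for `Δ^p f` at `a`
gives the polynomial part, with remainder `∑_{s ≤ j} C(n - 1 + j - s, j - s) Δ^m f(a + s)`.
At integer distance `k` the kernel `(k + α - 1)^(α - 1) / Γ(α)` of the fractional sum of order `α`
is `multichoose α k`, the `k`-th coefficient of `(1 - X)^(-α)`. Hence fractional sums compose like
these power series multiply: applying the sums of orders `μ - p` and `ν` to `Δ^m f` is the sum of
order `μ - p + ν = n`, whose kernel `multichoose n (j - s)` is exactly the Taylor coefficient.
-/

open Finset

namespace PowerSeries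

variable {R : Type*}

lemma coeff_mul_eq_sum_range [CommSemiring R] (φ ψ : PowerSeries R) (n : ℕ) :
    coeff n (φ * ψ) = ∑ i ∈ range (n + 1), coeff (n - i) φ * coeff i ψ := by
  rw [mul_comm φ ψ, coeff_mul, Nat.sum_antidiagonal_eq_sum_range_succ
    (fun i k => coeff i ψ * coeff k φ)]
  exact sum_congr rfl fun i _ => mul_comm _ _

variable [CommRing R] [BinomialRing R]

/-- The power series of `(1 - X) ^ (-r)`. -/
noncomputable def multichooseSeries (r : R) : PowerSeries R := mk (Ring.multichoose r ·)

lemma coeff_multichooseSeries (r : R) (k : ℕ) :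
    coeff k (multichooseSeries r) = Ring.multichoose r k :=
  coeff_mk _ _

lemma multichooseSeries_eq_rescale (r : R) :
    multichooseSeries r = rescale (-1) (binomialSeries R (-r)) := by
  ext k
  simp only [coeff_multichooseSeries, coeff_rescale, binomialSeries_coeff, Ring.choose_neg']
  simp [Int.negOnePow_def, Units.smul_def, ← mul_assoc, ← mul_pow]

lemma multichooseSeries_add (r s : R) :
    multichooseSeries (r + s) = multichooseSeries r * multichooseSeries s := by
  simp only [multichooseSeries_eq_rescale, neg_add, binomialSeries_add, map_mul]

end PowerSeries

open PowerSeries in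
theorem Ring.sum_multichoose_mul_sum_multichoose_s9 {R : Type*} [CommRing R] [BinomialRing R]
    (r s : R) (h : ℕ → R) (n : ℕ) :
    ∑ i ∈ range (n + 1), multichoose r (n - i) * ∑ k ∈ range (i + 1), multichoose s (i - k) * h k =
      ∑ k ∈ range (n + 1), multichoose (r + s) (n - k) * h k := by
  have hcoeff (t : R) (i : ℕ) :
      coeff i (multichooseSeries t * PowerSeries.mk h) =
        ∑ k ∈ range (i + 1), multichoose t (i - k) * h k := by
    simp only [coeff_mul_eq_sum_range, coeff_multichooseSeries, coeff_mk]
  calc _ = ∑ i ∈ range (n + 1), coeff (n - i) (multichooseSeries r) *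
          coeff i (multichooseSeries s * PowerSeries.mk h) := by
        simp only [hcoeff, coeff_multichooseSeries]
    _ = coeff n (multichooseSeries r * (multichooseSeries s * PowerSeries.mk h)) :=
        (coeff_mul_eq_sum_range _ _ n).symm
    _ = _ := by rw [← mul_assoc, ← multichooseSeries_add, hcoeff]

lemma Ring.multichoose_natCast_succ (n k : ℕ) :
    Ring.multichoose ((n + 1 : ℕ) : ℝ) k = ((n + k).choose k : ℝ) := by
  rw [Ring.multichoose_eq, ← Ring.choose_natCast]
  push_cast; ring_nf

lemma Real.Gamma_add_nat_eq_mul_multichoose (α : ℝ) (hα : 0 < α) (k : ℕ) :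
    Real.Gamma (α + k) = Real.Gamma α * k.factorial * Ring.multichoose α k := by
  rw [mul_assoc, ← nsmul_eq_mul, Ring.factorial_nsmul_multichoose_eq_ascPochhammer,
    Polynomial.ascPochhammer_smeval_eq_eval]
  induction k with
  | zero => simp
  | succ k ih =>
    rw [Nat.cast_succ, ← add_assoc, Real.Gamma_add_one (by positivity), ih,
      ascPochhammer_succ_eval]
    ring

lemma Finset.sum_range_choose_mul_add_succ {R : Type*} [Semiring R] (a : ℕ → R) (N k : ℕ) :
    ∑ r ∈ range (k + 1), (N.choose r : R) * (a r + a (r + 1)) =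
      ∑ r ∈ range (k + 1), ((N + 1).choose r : R) * a r + (N.choose k : R) * a (k + 1) := by
  induction k with
  | zero => simp [mul_add]
  | succ k ih =>
    rw [sum_range_succ, ih, sum_range_succ _ (k + 1), Nat.choose_succ_succ', Nat.cast_add]
    simp only [add_mul, mul_add]
    abel

lemma fdiff_eq_fwdDiff : fdiff = fwdDiff 1 := rfl

lemma fdiff_iterate_apply_add_one (g : ℝ → ℝ) (r : ℕ) (x : ℝ) :
    fdiff^[r] g (x + 1) = fdiff^[r] g x + fdiff^[r + 1] g x := by
  rw [Function.iterate_succ_apply', fdiff]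
  ring

theorem fdiff_iterate_taylor (g : ℝ → ℝ) (n j : ℕ) (x : ℝ) :
    g (x + (n + 1 : ℕ) + j) =
      ∑ r ∈ range (n + 1), ((n + 1 + j).choose r : ℝ) * fdiff^[r] g x +
        ∑ s ∈ range (j + 1), ((n + (j - s)).choose (j - s) : ℝ) * fdiff^[n + 1] g (x + s) := by
  induction j generalizing x with
  | zero =>
    have newton := shift_eq_sum_fwdDiff_iter 1 g (n + 1) x
    rw [nsmul_one, ← fdiff_eq_fwdDiff, sum_range_succ] at newton
    simpa using newton
  | succ j ih =>
    have hx : x + (n + 1 : ℕ) + (j + 1 : ℕ) = x + 1 + (n + 1 : ℕ) + j := by push_cast; ring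
    rw [hx, ih, sum_range_succ' _ (j + 1)]
    simp only [fdiff_iterate_apply_add_one, Finset.sum_range_choose_mul_add_succ]
    have hcorner : (n + (j + 1 - 0)).choose (j + 1 - 0) = (n + 1 + j).choose n := by
      rw [Nat.sub_zero, ← Nat.choose_symm_add, add_right_comm, add_assoc]
    have hshift (s : ℕ) : x + ((s + 1 : ℕ) : ℝ) = x + 1 + s := by push_cast; ring
    rw [hcorner, Nat.cast_zero, add_zero, ← add_assoc (n + 1) j 1]
    simp only [Nat.add_sub_add_right, hshift]
    ring

lemma gff_natCast_div_factorial_s9 (N r : ℕ) (h : r ≤ N) :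
    gff N r / r.factorial = N.choose r := by
  rw [gff, Nat.cast_choose ℝ h, ← Nat.cast_sub h, Real.Gamma_nat_eq_factorial,
    Real.Gamma_nat_eq_factorial]
  field_simp

lemma gff_add_sub_one {α : ℝ} (hα : 0 < α) (k : ℕ) :
    gff (α + k - 1) (α - 1) = Real.Gamma α * Ring.multichoose α k := by
  rw [gff, sub_add_cancel, show α + k - 1 - (α - 1) + 1 = (k : ℝ) + 1 by ring,
    Real.Gamma_nat_eq_factorial, Real.Gamma_add_nat_eq_mul_multichoose α hα]
  field_simp

lemma one_div_Gamma_mul_sum_gff {α : ℝ} (hα : 0 < α) (b t : ℝ) (h : ℝ → ℝ) (j : ℕ)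
    (ht : t = b + α + j) :
    1 / Real.Gamma α * ∑ i ∈ range (j + 1), gff (t - (b + i) - 1) (α - 1) * h (b + i) =
      ∑ i ∈ range (j + 1), Ring.multichoose α (j - i) * h (b + i) := by
  rw [mul_sum]
  refine sum_congr rfl fun i hi => ?_
  have hij : t - (b + i) - 1 = α + (j - i : ℕ) - 1 := by
    rw [Nat.cast_sub (Nat.lt_succ_iff.mp (mem_range.mp hi)), ht]; ring
  rw [hij, gff_add_sub_one hα, ← mul_assoc, ← mul_assoc, one_div_mul_cancel
    (Real.Gamma_pos_of_pos hα).ne', one_mul]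

lemma fsum_add_nat_s9 {α : ℝ} (hα : 0 < α) (b : ℝ) (h : ℝ → ℝ) (j : ℕ) :
    fsum α b h (b + α + j) = ∑ i ∈ range (j + 1), Ring.multichoose α (j - i) * h (b + i) := by
  rw [fsum, show b + α + j - α - b = (j : ℤ) by push_cast; ring, Int.floor_intCast,
    Int.toNat_natCast]
  exact one_div_Gamma_mul_sum_gff hα b _ h j rfl

lemma sum_Ico_gff_div_factorial_mul (f : ℝ → ℝ) (p n N : ℕ) (hn : n ≤ N) (x : ℝ) :
    ∑ k ∈ Ico p (n + p), gff N ((k : ℝ) - p) / ((k - p).factorial : ℝ) * fdiff^[k] f x =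
      ∑ r ∈ range n, (N.choose r : ℝ) * fdiff^[r] (fdiff^[p] f) x := by
  rw [sum_Ico_eq_sum_range, Nat.add_sub_cancel]
  refine sum_congr rfl fun r hr => ?_
  rw [Nat.cast_add, add_sub_cancel_left, Nat.add_sub_cancel_left,
    gff_natCast_div_factorial_s9 _ _ (by have := mem_range.mp hr; omega),
    add_comm p, Function.iterate_add_apply]

theorem stmt9 (μ ν : ℝ) (p : ℕ) (hμ : (p : ℝ) < μ) (hni : ∀ n : ℤ, μ ≠ n)
    (m : ℕ) (hm : m = ⌈μ⌉₊) (hν : ν = m - μ) (f : ℝ → ℝ) (a j : ℕ) (t : ℝ)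
    (ht : t = a + m - p + j) :
    fdiff^[p] f t =
      (∑ k ∈ Finset.Ico p m,
          gff (t - a) ((k : ℝ) - p) / ((k - p).factorial : ℝ) * fdiff^[k] f a) +
        (1 / Real.Gamma (μ - p)) *
          ∑ i ∈ Finset.range (j + 1),
            gff (t - (a + ν + i) - 1) (μ - p - 1) * caputo μ a f (a + ν + i) := by
  have hμm : μ < m := (hm ▸ Nat.le_ceil μ).lt_of_ne (by exact_mod_cast hni m)
  have hpm : p < m := by exact_mod_cast hμ.trans hμm
  obtain ⟨n, rfl⟩ : ∃ n, m = n + 1 + p := ⟨m - p - 1, by omega⟩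
  have hα : 0 < μ - p := sub_pos.mpr hμ
  have hν0 : 0 < ν := hν ▸ sub_pos.mpr hμm
  have horder : μ - p + ν = (n + 1 : ℕ) := by rw [hν]; push_cast; ring
  have ht' : t = a + (n + 1 : ℕ) + j := by rw [ht]; push_cast; ring
  have hcaputo (i : ℕ) : caputo μ a f (a + ν + i) =
      ∑ s ∈ range (i + 1), Ring.multichoose ν (i - s) * fdiff^[n + 1 + p] f (a + s) := by
    rw [caputo, ← hm, ← hν, fsum_add_nat_s9 hν0]
  rw [show t - a = (n + 1 + j : ℕ) by rw [ht']; push_cast; ring,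
    sum_Ico_gff_div_factorial_mul f p (n + 1) _ (by omega),
    one_div_Gamma_mul_sum_gff hα _ t _ j (by rw [ht', hν]; push_cast; ring)]
  simp only [hcaputo, Ring.sum_multichoose_mul_sum_multichoose_s9, horder,
    Ring.multichoose_natCast_succ, Function.iterate_add_apply fdiff (n + 1) p]
  rw [ht', fdiff_iterate_taylor (fdiff^[p] f)]
end

section
/- Let μ > p, p ∈ ℤ⁺, μ non-integer, m = ⌈μ⌉, ν = m - μ, f defined on ℕ_a, a ∈ ℤ⁺, b ∈ ℕ with a+m-p < b, and assume Δ^k f(a) = 0 for k = p+1, ..., m-1. Then |(1/(b-a-m+p))·∑_{j=a+m-p+1}^{b} Δ^p f(j) - Δ^p f(a)| ≤ (1/((b-a-m+p)·Γ(μ-p+2)))·[(b-a-ν+1)^(μ-p+1) - Γ(μ-p+2)]·max_{t ∈ {a+ν, ..., b-μ+p}} |Δ_*^μ f(t)|. -/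
/-!
Write `C_α(k) = Γ(α + k) / (Γ(α) k!)`, i.e. `Ring.multichoose α k`, the coefficients of
`(1 - X)^(-α)`; sequences on `ℕ` are handled as power series, so that convolution is
multiplication. The fractional sum of order `ν` at `a + ν + i` is `(C_ν ⋆ h(a + ·))(i)`.
Put `β = μ - p` and `m - p = Q + 1`. By Chu–Vandermonde `C_β ⋆ C_ν = C_(Q+1)`, and
`C_(Q+1) ⋆ Δ^(Q+1) ψ(a + ·)` is the `(Q+1)`-fold partial sum of `Δ^(Q+1) ψ`, which equals
`ψ(a + n + Q + 1) - ψ(a)` as soon as `Δ^r ψ(a) = 0` for `1 ≤ r ≤ Q`. With `ψ = Δ^p f` this gives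
`Δ^p f(a + Q + 1 + n) - Δ^p f(a) = ∑_{i ≤ n} C_β(n - i) Δ_*^μ f(a + ν + i)`.
Bounding `|Δ_*^μ f|` by its maximum, `∑_{i ≤ n} C_β(i) = C_(β+1)(n)` and
`∑_{n=1}^N C_(β+1)(n) = C_(β+2)(N) - 1`, while `Γ(β + 2) C_(β+2)(N) = (N + β + 1)^(β+1)`.
-/

open Finset

open PowerSeries (coeff coeff_mul coeff_mk)

namespace Ring

theorem multichoose_add {R : Type*} [CommRing R] [BinomialRing R] (r s : R) (n : ℕ) :
    multichoose (r + s) n =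
      ∑ ij ∈ antidiagonal n, multichoose r ij.1 * multichoose s ij.2 := by
  -- Chu–Vandermonde at `-r, -s`, using `choose (-r) n = (-1)^n • multichoose r n`.
  have h := add_choose_eq n (Commute.all (-r) (-s))
  rw [← neg_add, choose_neg'] at h
  simp only [choose_neg', smul_mul_smul_comm, ← Int.negOnePow_add, ← Nat.cast_add] at h
  rw [← smul_left_cancel_iff (n : ℤ).negOnePow, h, smul_sum]
  exact sum_congr rfl fun ij hij => by rw [mem_antidiagonal.mp hij]

theorem mk_multichoose_add {R : Type*} [CommRing R] [BinomialRing R] (r s : R) :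
    PowerSeries.mk (multichoose (r + s)) =
      PowerSeries.mk (multichoose r) * PowerSeries.mk (multichoose s) := by
  ext n
  rw [coeff_mul, coeff_mk, multichoose_add]
  simp only [coeff_mk]

theorem sum_range_multichoose {R : Type*} [NonAssocSemiring R] [Pow R ℕ] [NatPowAssoc R]
    [BinomialRing R] (r : R) (n : ℕ) :
    ∑ k ∈ range (n + 1), multichoose r k = multichoose (r + 1) n := by
  induction n with
  | zero => simp
  | succ n ih => rw [sum_range_succ, ih, multichoose_succ_succ, add_comm]

theorem multichoose_pos {α : ℝ} (hα : 0 < α) (k : ℕ) : 0 < multichoose α k := by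
  have h := factorial_nsmul_multichoose_eq_ascPochhammer α k
  rw [nsmul_eq_mul, Polynomial.ascPochhammer_smeval_eq_eval] at h
  exact pos_of_mul_pos_right (h ▸ ascPochhammer_pos k α hα) (by positivity)

end Ring

theorem PowerSeries.coeff_mul_mk_one {R : Type*} [Semiring R] (φ : PowerSeries R) (n : ℕ) :
    coeff n (φ * PowerSeries.mk 1) = ∑ k ∈ range (n + 1), coeff k φ := by
  simp [coeff_mul, Nat.sum_antidiagonal_eq_sum_range_succ_mk]

theorem Real.Gamma_add_natCast_eq_mul_multichoose {α : ℝ} (hα : 0 < α) (k : ℕ) :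
    Real.Gamma (α + k) = Real.Gamma α * k.factorial * Ring.multichoose α k := by
  rw [mul_assoc, ← nsmul_eq_mul, Ring.factorial_nsmul_multichoose_eq_ascPochhammer,
    Polynomial.ascPochhammer_smeval_eq_eval]
  induction k with
  | zero => simp
  | succ k ih =>
    rw [Nat.cast_succ, ← add_assoc, Real.Gamma_add_one (by positivity), ih,
      ascPochhammer_succ_eval]
    ring

theorem gff_natCast_add_sub_one {α : ℝ} (hα : 0 < α) (k : ℕ) :
    gff (k + α - 1) (α - 1) = Real.Gamma α * Ring.multichoose α k := by
  rw [gff, show (k : ℝ) + α - 1 + 1 = α + k by ring, Real.Gamma_add_natCast_eq_mul_multichoose hα,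
    show (k : ℝ) + α - 1 - (α - 1) + 1 = k + 1 by ring, Real.Gamma_nat_eq_factorial]
  field_simp

theorem fsum_add_natCast_s13 {ν : ℝ} (hν : 0 < ν) (a : ℝ) (h : ℝ → ℝ) (i : ℕ) :
    fsum ν a h (a + ν + i) =
      coeff i (PowerSeries.mk (Ring.multichoose ν) * PowerSeries.mk fun j => h (a + j)) := by
  rw [fsum, show a + ν + i - ν - a = (i : ℝ) by ring, Int.floor_natCast, Int.toNat_natCast,
    mul_comm (PowerSeries.mk _), coeff_mul, Nat.sum_antidiagonal_eq_sum_range_succ_mk, mul_sum]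
  refine sum_congr rfl fun j hj => ?_
  have hji : j ≤ i := Nat.lt_succ_iff.mp (mem_range.mp hj)
  rw [show a + ν + i - (a + j) - 1 = ((i - j : ℕ) : ℝ) + ν - 1 by push_cast [hji]; ring,
    gff_natCast_add_sub_one hν, coeff_mk, coeff_mk]
  field_simp [(Real.Gamma_pos_of_pos hν).ne']

theorem sum_range_fdiff (ψ : ℝ → ℝ) (x : ℝ) (n : ℕ) :
    ∑ l ∈ range n, fdiff ψ (x + l) = ψ (x + n) - ψ x := by
  simpa [fdiff, add_assoc] using sum_range_sub (fun l : ℕ => ψ (x + l)) n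

theorem eq_of_fdiff_iterate_eq_zero {ψ : ℝ → ℝ} {x : ℝ} {k : ℕ}
    (hψ : ∀ r ∈ Icc 1 k, fdiff^[r] ψ x = 0) : ψ (x + k) = ψ x := by
  have h := shift_eq_sum_fwdDiff_iter 1 ψ k x
  rw [nsmul_one, sum_range_succ', sum_eq_zero fun r hr => ?_] at h
  · simpa using h
  · rw [show fwdDiff (1 : ℝ) = fdiff from rfl, hψ (r + 1) (by simp at hr ⊢; omega), smul_zero]

theorem sub_eq_coeff_of_fdiff_iterate_eq_zero (q : ℕ) (ψ : ℝ → ℝ) (x : ℝ)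
    (hψ : ∀ r ∈ Icc 1 q, fdiff^[r] ψ x = 0) (n : ℕ) :
    ψ (x + (n + (q + 1))) - ψ x =
      coeff n (PowerSeries.mk (Ring.multichoose ((q : ℝ) + 1)) *
        PowerSeries.mk fun j => fdiff^[q + 1] ψ (x + j)) := by
  induction q generalizing ψ n with
  | zero =>
    have hmk : PowerSeries.mk (Ring.multichoose (1 : ℝ)) = PowerSeries.mk 1 := by ext; simp
    rw [Nat.cast_zero, zero_add, hmk, mul_comm, PowerSeries.coeff_mul_mk_one, ← Nat.cast_succ,
      ← sum_range_fdiff]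
    simp
  | succ q ih =>
    have hmk : PowerSeries.mk (Ring.multichoose ((↑(q + 1) : ℝ) + 1)) =
        PowerSeries.mk (Ring.multichoose ((q : ℝ) + 1)) * PowerSeries.mk 1 := by
      rw [Nat.cast_succ, Ring.mk_multichoose_add]
      congr 1; ext; simp
    have hΔ : fdiff ψ x = 0 := hψ 1 (by simp)
    have hΔψ : ∀ r ∈ Icc 1 q, fdiff^[r] (fdiff ψ) x = 0 := fun r hr => by
      rw [← Function.iterate_succ_apply]; exact hψ _ (by simp at hr ⊢; omega)
    have hshift : ψ (x + (q + 1 : ℕ)) = ψ x :=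
      eq_of_fdiff_iterate_eq_zero fun r hr => hψ r (by simpa using hr)
    have htel := sum_range_fdiff ψ (x + (q + 1 : ℕ)) (n + 1)
    rw [hshift] at htel
    calc ψ (x + (n + (↑(q + 1) + 1))) - ψ x
        = ∑ k ∈ range (n + 1), (fdiff ψ (x + (k + (↑q + 1))) - fdiff ψ x) := by
          simp only [hΔ, sub_zero]
          convert htel.symm using 2
          · push_cast; ring_nf
          · push_cast; ring_nf
      _ = _ := by
          rw [hmk, mul_right_comm, PowerSeries.coeff_mul_mk_one]
          exact sum_congr rfl fun k _ => ih (fdiff ψ) hΔψ k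

theorem abs_coeff_mul_mk_le {α : ℝ} (hα : 0 < α) {u : ℕ → ℝ} {M : ℝ} {n : ℕ}
    (hu : ∀ j ≤ n, |u j| ≤ M) :
    |coeff n (PowerSeries.mk (Ring.multichoose α) * PowerSeries.mk u)| ≤
      Ring.multichoose (α + 1) n * M := by
  have hsum : ∑ ij ∈ antidiagonal n, Ring.multichoose α ij.1 = Ring.multichoose (α + 1) n := by
    rw [Nat.sum_antidiagonal_eq_sum_range_succ_mk]
    exact Ring.sum_range_multichoose α n
  rw [coeff_mul, ← hsum, sum_mul]
  refine (abs_sum_le_sum_abs _ _).trans (sum_le_sum fun ij hij => ?_)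
  rw [coeff_mk, coeff_mk, abs_mul, abs_of_pos (Ring.multichoose_pos hα _)]
  exact mul_le_mul_of_nonneg_left (hu _ (HasAntidiagonal.antidiagonal.snd_le hij))
    (Ring.multichoose_pos hα _).le

theorem abs_average_sub_le {β : ℝ} (hβ : 0 < β) {G c : ℕ → ℝ} {G₀ : ℝ}
    (hG : ∀ n, G n - G₀ = coeff n (PowerSeries.mk (Ring.multichoose β) * PowerSeries.mk c))
    {N : ℕ} (hN : 0 < N) {M : ℝ} (hM : ∀ i ≤ N, |c i| ≤ M) :
    |1 / (N : ℝ) * ∑ n ∈ range N, G (n + 1) - G₀| ≤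
      (Ring.multichoose (β + 2) N - 1) * M / N := by
  have hN' : (0 : ℝ) < N := Nat.cast_pos.mpr hN
  have hsum : ∑ n ∈ range N, Ring.multichoose (β + 1) (n + 1) =
      Ring.multichoose (β + 2) N - 1 := by
    have h := Ring.sum_range_multichoose (β + 1) N
    rw [sum_range_succ', Ring.multichoose_zero_right, add_assoc, one_add_one_eq_two] at h
    linarith
  rw [show 1 / (N : ℝ) * ∑ n ∈ range N, G (n + 1) - G₀ = (∑ n ∈ range N, (G (n + 1) - G₀)) / N by
    rw [sum_sub_distrib, sum_const, card_range, nsmul_eq_mul]; field_simp,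
    abs_div, abs_of_pos hN', ← hsum, sum_mul]
  gcongr
  refine (abs_sum_le_sum_abs _ _).trans (sum_le_sum fun n hn => ?_)
  rw [hG]
  exact abs_coeff_mul_mk_le hβ fun j hj => hM j (by simp at hn; omega)

theorem fdiff_iterate_sub_eq_coeff_caputo {μ : ℝ} {p Q : ℕ} (hQ : ⌈μ⌉₊ = p + Q + 1)
    (hν : 0 < (⌈μ⌉₊ : ℝ) - μ) (f : ℝ → ℝ) (a : ℝ)
    (hz : ∀ r ∈ Icc 1 Q, fdiff^[p + r] f a = 0) (n : ℕ) :
    fdiff^[p] f (a + (n + (Q + 1))) - fdiff^[p] f a =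
      coeff n (PowerSeries.mk (Ring.multichoose (μ - p)) *
        PowerSeries.mk fun i => caputo μ a f (a + (⌈μ⌉₊ - μ) + i)) := by
  have hc : (PowerSeries.mk fun i => caputo μ a f (a + (⌈μ⌉₊ - μ) + i)) =
      PowerSeries.mk (Ring.multichoose ((⌈μ⌉₊ : ℝ) - μ)) *
        PowerSeries.mk fun j => fdiff^[⌈μ⌉₊] f (a + j) := by
    ext i
    rw [coeff_mk]
    exact fsum_add_natCast_s13 hν a _ i
  have hβν : μ - p + (⌈μ⌉₊ - μ) = (Q : ℝ) + 1 := by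
    rw [hQ]; push_cast; ring
  rw [hc, ← mul_assoc, ← Ring.mk_multichoose_add, hβν, hQ, add_assoc, add_comm p,
    Function.iterate_add]
  exact sub_eq_coeff_of_fdiff_iterate_eq_zero Q _ a
    (fun r hr => by rw [← Function.iterate_add_apply, add_comm]; exact hz r hr) n

theorem stmt13 (μ ν : ℝ) (p : ℕ) (hμ : (p : ℝ) < μ) (hni : ∀ n : ℤ, μ ≠ n)
    (m : ℕ) (hm : m = ⌈μ⌉₊) (hν : ν = m - μ) (f : ℝ → ℝ) (a b : ℕ)
    (hb : a + m - p < b) (hz : ∀ k, p + 1 ≤ k → k ≤ m - 1 → fdiff^[k] f a = 0) :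
    |(1 / ((b : ℝ) - a - m + p)) *
          (∑ j ∈ Finset.Icc (a + m - p + 1) b, fdiff^[p] f (j : ℝ)) -
        fdiff^[p] f a| ≤
      (1 / (((b : ℝ) - a - m + p) * Real.Gamma (μ - p + 2))) *
        (gff ((b : ℝ) - a - ν + 1) (μ - p + 1) - Real.Gamma (μ - p + 2)) *
        (Finset.range (b - (a + m - p) + 1)).sup' ⟨0, Finset.mem_range.mpr (Nat.succ_pos _)⟩
          (fun i => |caputo μ a f (a + ν + i)|) := by
  subst hm hν
  have hpm : p < ⌈μ⌉₊ := Nat.lt_ceil.mpr hμ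
  have hν0 : 0 < (⌈μ⌉₊ : ℝ) - μ := sub_pos.mpr <| (Nat.le_ceil μ).lt_of_ne fun h =>
    hni ⌈μ⌉₊ (by exact_mod_cast h)
  obtain ⟨Q, hQ⟩ : ∃ Q, ⌈μ⌉₊ = p + Q + 1 := ⟨⌈μ⌉₊ - p - 1, by omega⟩
  set N := b - (a + ⌈μ⌉₊ - p) with hN
  set M := (range (N + 1)).sup' ⟨0, mem_range.mpr (Nat.succ_pos _)⟩
    (fun i => |caputo μ a f (a + (⌈μ⌉₊ - μ) + i)|)
  have key := fdiff_iterate_sub_eq_coeff_caputo hQ hν0 f a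
    (fun r hr => hz _ (by simp at hr; omega) (by simp at hr; omega))
  have hsum : ∑ j ∈ Icc (a + ⌈μ⌉₊ - p + 1) b, fdiff^[p] f (j : ℝ) =
      ∑ n ∈ range N, fdiff^[p] f (a + (((n + 1 : ℕ) : ℝ) + (Q + 1))) := by
    rw [← Ico_add_one_right_eq_Icc, sum_Ico_eq_sum_range,
      show b + 1 - (a + ⌈μ⌉₊ - p + 1) = N by omega]
    refine sum_congr rfl fun n _ => congrArg _ ?_
    rw [show a + ⌈μ⌉₊ - p + 1 + n = a + (n + 1 + (Q + 1)) by omega]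
    push_cast; ring
  have hden : (b : ℝ) - a - ⌈μ⌉₊ + p = N := by
    rw [hN, Nat.cast_sub (by omega), Nat.cast_sub (by omega)]; push_cast; ring
  have hgff : gff ((b : ℝ) - a - (⌈μ⌉₊ - μ) + 1) (μ - p + 1) =
      Real.Gamma (μ - p + 2) * Ring.multichoose (μ - p + 2) N := by
    rw [← gff_natCast_add_sub_one (by linarith), ← hden]
    ring_nf
  rw [hsum, hden, hgff]
  calc _ ≤ (Ring.multichoose (μ - p + 2) N - 1) * M / N :=
        abs_average_sub_le (by linarith) key (by omega) fun i hi =>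
          le_sup' (fun i : ℕ => |caputo μ a f (a + (⌈μ⌉₊ - μ) + i)|) (mem_range.mpr (by omega))
    _ = _ := by
        field_simp [(Real.Gamma_pos_of_pos (show 0 < μ - p + 2 by linarith)).ne']
end
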